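/- Fix (θ₁,θ₂) ∈ ℝ² and for j ∈ {1,…,N} set q_j = (j + θ₂/(2π))/N. Then for each j the assignment φ ↦ N^{−1/2} Σ_{n∈ℤ} exp(−i n θ₁) φ(q_j + n) (the series converges absolutely for every Schwartz function φ) defines a tempered distribution u_j ∈ 𝒮'(ℝ); each u_j belongs to ℋ_T(θ₁,θ₂) (i.e. T_Q u_j = exp(iθ₁) u_j and T_P u_j = exp(iθ₂) u_j), and the family (u_j)_{j=1,…,N} is linearly independent over ℂ. -/

import Mathlib

open MeasureTheory Complex SchwartzMap

/-- The Hilbert space of the torus `ℋ_T(θ₁,θ₂)` (see statement 3). -/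
noncomputable def HT (N : ℕ) (θ₁ θ₂ : ℝ) : Submodule ℂ (SchwartzMap ℝ ℂ →L[ℂ] ℂ) where
  carrier := {u |
    (∀ φ ψ : SchwartzMap ℝ ℂ, (∀ x : ℝ, ψ x = φ (x + 1)) →
      u ψ = Complex.exp (Complex.I * θ₁) * u φ) ∧
    (∀ φ ψ : SchwartzMap ℝ ℂ,
      (∀ x : ℝ, ψ x = Complex.exp (2 * Real.pi * Complex.I * N * x) * φ x) →
      u ψ = Complex.exp (Complex.I * θ₂) * u φ)}
  add_mem' := by
    rintro u v ⟨hu1, hu2⟩ ⟨hv1, hv2⟩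
    constructor
    · intro φ ψ h
      simp only [ContinuousLinearMap.add_apply, hu1 φ ψ h, hv1 φ ψ h]
      ring
    · intro φ ψ h
      simp only [ContinuousLinearMap.add_apply, hu2 φ ψ h, hv2 φ ψ h]
      ring
  zero_mem' := by
    constructor <;> intro φ ψ h <;> simp
  smul_mem' := by
    rintro c u ⟨hu1, hu2⟩
    constructor
    · intro φ ψ h
      simp only [ContinuousLinearMap.smul_apply, hu1 φ ψ h, smul_eq_mul]
      ring
    · intro φ ψ h
      simp only [ContinuousLinearMap.smul_apply, hu2 φ ψ h, smul_eq_mul]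
      ring

/-- The lattice point `q_j = (j + θ₂/(2π))/N` for `j = 1,…,N` (here `j : Fin N` represents
the index `j+1`). -/
noncomputable def qpt (N : ℕ) (θ₂ : ℝ) (j : Fin N) : ℝ :=
  (((j : ℕ) : ℝ) + 1 + θ₂ / (2 * Real.pi)) / N


noncomputable def toSchwartz (f : ℝ → ℂ) (h1 : ContDiff ℝ (↑(⊤:ℕ∞)) f)
    (h2 : HasCompactSupport f) : SchwartzMap ℝ ℂ where
  toFun := f
  smooth' := h1
  decay' := by
    intro k n
    have hc : Continuous fun x : ℝ => ‖x‖ ^ k * ‖iteratedFDeriv ℝ n f x‖ :=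
      (continuous_norm.pow k).mul ((h1.continuous_iteratedFDeriv (mod_cast le_top)).norm)
    have hs : HasCompactSupport fun x : ℝ => ‖x‖ ^ k * ‖iteratedFDeriv ℝ n f x‖ :=
      ((h2.iteratedFDeriv n).norm).mul_left
    obtain ⟨C, hC⟩ := hs.exists_bound_of_continuous hc
    exact ⟨C, fun x => (le_abs_self _).trans ((Real.norm_eq_abs _) ▸ hC x)⟩

@[simp] lemma toSchwartz_apply (f : ℝ → ℂ) (h1) (h2) (x : ℝ) :
    toSchwartz f h1 h2 x = f x := rfl

lemma summable_inv_one_add_sq (q : ℝ) :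
    Summable fun n : ℤ => ((1 + |q + (n : ℝ)|) ^ 2)⁻¹ := by
  have hg : Summable fun n : ℤ => 1 / |(n : ℝ) + q| ^ ((2:ℕ) : ℝ) :=
    (Real.summable_one_div_int_add_rpow q 2).2 one_lt_two
  simp_rw [Real.rpow_natCast] at hg
  apply Summable.of_norm_bounded_eventually (g := fun n : ℤ => 1 / |(n : ℝ) + q| ^ (2:ℕ)) hg
  have hfin : {n : ℤ | (n : ℝ) = -q}.Finite := by
    apply Set.Subsingleton.finite
    intro a ha b hb
    exact_mod_cast (ha : (a:ℝ) = -q).trans (hb : (b:ℝ) = -q).symm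
  apply hfin.subset
  intro n hn
  simp only [Set.mem_setOf_eq, Set.mem_compl_iff] at hn ⊢
  by_contra h
  apply hn
  have h0 : (n : ℝ) + q ≠ 0 := fun hc => h (by linarith)
  have h1 : 0 < |(n : ℝ) + q| := abs_pos.2 h0
  rw [norm_inv, norm_pow, Real.norm_eq_abs, one_div,
    abs_of_pos (by positivity : (0:ℝ) < 1 + |q + (n:ℝ)|)]
  apply inv_anti₀ (by positivity)
  have he : |(n:ℝ) + q| = |q + (n:ℝ)| := by rw [add_comm]
  nlinarith [abs_nonneg (q + (n:ℝ))]

lemma norm_exp_unit (n : ℤ) (θ : ℝ) : ‖Complex.exp (-Complex.I * (n:ℂ) * θ)‖ = 1 := by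
  have h : (-Complex.I * (n:ℂ) * θ).re = 0 := by simp
  rw [Complex.norm_exp, h, Real.exp_zero]

lemma phi_le (φ : SchwartzMap ℝ ℂ) (x : ℝ) :
    ‖φ x‖ ≤ ((1 + |x|) ^ 2)⁻¹ *
      (2 ^ 2 * (Finset.Iic ((2:ℕ),(0:ℕ))).sup (schwartzSeminormFamily ℂ ℝ ℂ) φ) := by
  have h := one_add_le_sup_seminorm_apply (𝕜 := ℂ) (m := ((2:ℕ),(0:ℕ))) le_rfl le_rfl φ x
  rw [norm_iteratedFDeriv_zero, Real.norm_eq_abs] at h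
  rw [inv_mul_eq_div, le_div_iff₀ (by positivity), mul_comm]
  exact h

lemma summable_norm_term (θ₁ q : ℝ) (φ : SchwartzMap ℝ ℂ) :
    Summable fun n : ℤ => ‖Complex.exp (-Complex.I * (n:ℂ) * θ₁) * φ (q + n)‖ := by
  simp_rw [norm_mul, norm_exp_unit, one_mul]
  exact Summable.of_nonneg_of_le (fun n => norm_nonneg _) (fun n => phi_le φ (q + n))
    ((summable_inv_one_add_sq q).mul_right _)

lemma summable_term (θ₁ q : ℝ) (φ : SchwartzMap ℝ ℂ) :
    Summable fun n : ℤ => Complex.exp (-Complex.I * (n:ℂ) * θ₁) * φ (q + n) :=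
  (summable_norm_term θ₁ q φ).of_norm

noncomputable def TD (θ₁ q : ℝ) : SchwartzMap ℝ ℂ →L[ℂ] ℂ :=
  mkCLMtoNormedSpace
    (fun φ => ∑' n : ℤ, Complex.exp (-Complex.I * (n:ℂ) * θ₁) * φ (q + n))
    (fun φ ψ => by
      simp_rw [SchwartzMap.add_apply, mul_add]
      exact Summable.tsum_add (summable_term θ₁ q φ) (summable_term θ₁ q ψ))
    (fun a φ => by
      simp only [SchwartzMap.smul_apply, smul_eq_mul, RingHom.id_apply]
      rw [← tsum_mul_left]
      exact tsum_congr fun n => by ring)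
    (by
      refine ⟨Finset.Iic ((2:ℕ),(0:ℕ)),
        (∑' n : ℤ, ((1 + |q + (n:ℝ)|) ^ 2)⁻¹) * 2 ^ 2, ?_, fun φ => ?_⟩
      · exact mul_nonneg (tsum_nonneg fun n => by positivity) (by norm_num)
      · calc ‖∑' n : ℤ, Complex.exp (-Complex.I * (n:ℂ) * θ₁) * φ (q + n)‖
            ≤ ∑' n : ℤ, ‖Complex.exp (-Complex.I * (n:ℂ) * θ₁) * φ (q + n)‖ :=
              norm_tsum_le_tsum_norm (summable_norm_term θ₁ q φ)
          _ = ∑' n : ℤ, ‖φ (q + n)‖ := by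
              simp_rw [norm_mul, norm_exp_unit, one_mul]
          _ ≤ ∑' n : ℤ, ((1 + |q + (n:ℝ)|) ^ 2)⁻¹ *
                (2 ^ 2 * (Finset.Iic ((2:ℕ),(0:ℕ))).sup (schwartzSeminormFamily ℂ ℝ ℂ) φ) := by
              refine Summable.tsum_le_tsum (fun n => phi_le φ (q + n)) ?_ ?_
              · exact Summable.of_nonneg_of_le (fun n => norm_nonneg _)
                  (fun n => phi_le φ (q + n)) ((summable_inv_one_add_sq q).mul_right _)
              · exact (summable_inv_one_add_sq q).mul_right _
          _ = (∑' n : ℤ, ((1 + |q + (n:ℝ)|) ^ 2)⁻¹) * 2 ^ 2 *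
                (Finset.Iic ((2:ℕ),(0:ℕ))).sup (schwartzSeminormFamily ℂ ℝ ℂ) φ := by
              rw [tsum_mul_right, mul_assoc])

lemma TD_apply (θ₁ q : ℝ) (φ : SchwartzMap ℝ ℂ) :
    TD θ₁ q φ = ∑' n : ℤ, Complex.exp (-Complex.I * (n:ℂ) * θ₁) * φ (q + n) := rfl

lemma TD_translate (θ₁ q : ℝ) (φ ψ : SchwartzMap ℝ ℂ) (h : ∀ x : ℝ, ψ x = φ (x + 1)) :
    TD θ₁ q ψ = Complex.exp (Complex.I * θ₁) * TD θ₁ q φ := by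
  rw [TD_apply, TD_apply, ← tsum_mul_left,
    ← (Equiv.addRight (1:ℤ)).tsum_eq
      (fun n : ℤ => Complex.exp (Complex.I * θ₁) *
        (Complex.exp (-Complex.I * (n:ℂ) * θ₁) * φ (q + n)))]
  refine tsum_congr fun n => ?_
  simp only [Equiv.coe_addRight]
  rw [h (q + n)]
  have h1 : Complex.exp (Complex.I * θ₁) * Complex.exp (-Complex.I * ((n:ℂ) + 1) * θ₁)
      = Complex.exp (-Complex.I * (n:ℂ) * θ₁) := by
    rw [← Complex.exp_add]; congr 1; ring
  push_cast
  rw [← mul_assoc, h1, add_assoc]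

lemma TD_modulate (N : ℕ) (hN : 1 ≤ N) (θ₁ θ₂ : ℝ) (j : Fin N) (φ ψ : SchwartzMap ℝ ℂ)
    (h : ∀ x : ℝ, ψ x = Complex.exp (2 * Real.pi * Complex.I * N * x) * φ x) :
    TD θ₁ (qpt N θ₂ j) ψ = Complex.exp (Complex.I * θ₂) * TD θ₁ (qpt N θ₂ j) φ := by
  have hNc : ((N:ℂ)) ≠ 0 := Nat.cast_ne_zero.2 (by omega)
  have hπ : ((Real.pi : ℂ)) ≠ 0 := Complex.ofReal_ne_zero.2 Real.pi_ne_zero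
  rw [TD_apply, TD_apply, ← tsum_mul_left]
  refine tsum_congr fun n => ?_
  rw [h (qpt N θ₂ j + n)]
  have key : Complex.exp (2 * Real.pi * Complex.I * N * ((qpt N θ₂ j : ℝ) + (n:ℝ) : ℝ))
      = Complex.exp (Complex.I * θ₂) := by
    have harg : (2 * (Real.pi:ℂ) * Complex.I * N * (((qpt N θ₂ j : ℝ):ℂ) + (n:ℂ)))
        = Complex.I * θ₂ + (((j:ℕ):ℤ) + 1 + (n:ℤ) * (N:ℤ)) * (2 * Real.pi * Complex.I) := by
      simp only [qpt]
      push_cast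
      field_simp
      ring
    rw [show ((qpt N θ₂ j + (n:ℝ) : ℝ) : ℂ) = ((qpt N θ₂ j : ℝ):ℂ) + (n:ℂ) by push_cast; ring]
      at *
    have h2 : Complex.exp (((((j:ℕ):ℤ):ℂ) + 1 + (n:ℂ) * ((N:ℤ):ℂ)) * (2 * Real.pi * Complex.I))
        = 1 := by
      have h3 := Complex.exp_int_mul_two_pi_mul_I (((j:ℕ):ℤ) + 1 + n * (N:ℤ))
      push_cast at h3 ⊢
      exact h3
    rw [harg, Complex.exp_add, h2, mul_one]
  rw [key]; ring

lemma qpt_sep (N : ℕ) (hN : 1 ≤ N) (θ₂ : ℝ) (i k : Fin N) (n : ℤ) (h : ¬(i = k ∧ n = 0)) :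
    (1:ℝ)/N ≤ |qpt N θ₂ i + n - qpt N θ₂ k| := by
  have hN0 : (0:ℝ) < N := by exact_mod_cast Nat.pos_of_ne_zero (by omega)
  set m : ℤ := (i:ℤ) - (k:ℤ) + n * N with hm_def
  have hm : qpt N θ₂ i + n - qpt N θ₂ k = (m:ℝ)/N := by
    simp only [qpt, hm_def]
    field_simp
    push_cast
    ring
  have hm0 : m ≠ 0 := by
    intro hc
    have hik : (i:ℤ) - (k:ℤ) = -(n * N) := by omega
    have hi : (i:ℤ) < N := by exact_mod_cast i.2
    have hk : (k:ℤ) < N := by exact_mod_cast k.2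
    have hi0 : 0 ≤ (i:ℤ) := Int.natCast_nonneg _
    have hk0 : 0 ≤ (k:ℤ) := Int.natCast_nonneg _
    have hn0 : n = 0 := by
      by_contra hn
      have h1 : 1 ≤ |n| := Int.one_le_abs hn
      have h2 : |n * (N:ℤ)| = |n| * N := by
        rw [abs_mul, abs_of_nonneg (by positivity : (0:ℤ) ≤ (N:ℤ))]
      have h3 : |(i:ℤ) - (k:ℤ)| < N := by rw [abs_sub_lt_iff]; constructor <;> omega
      have h4 : (N:ℤ) ≤ |n * (N:ℤ)| := by
        rw [h2]; nlinarith [Int.natCast_nonneg N]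
      have h5 : |(i:ℤ) - (k:ℤ)| = |n * (N:ℤ)| := by rw [hik, abs_neg]
      omega
    apply h
    refine ⟨?_, hn0⟩
    rw [hn0] at hik
    simp at hik
    exact Fin.ext (by omega)
  rw [hm, abs_div, abs_of_pos hN0]
  gcongr
  rw [← Int.cast_abs]
  exact_mod_cast Int.one_le_abs hm0

lemma exists_bump (c r : ℝ) (hr : 0 < r) :
    ∃ φ : SchwartzMap ℝ ℂ, φ c = 1 ∧ ∀ x : ℝ, r ≤ |x - c| → φ x = 0 := by
  set b : ContDiffBump c := ⟨r/2, r, by positivity, by linarith⟩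
  have hcd : ContDiff ℝ (↑(⊤:ℕ∞)) (fun x : ℝ => ((b x : ℝ) : ℂ)) :=
    Complex.ofRealCLM.contDiff.comp b.contDiff
  have hcs : HasCompactSupport (fun x : ℝ => ((b x : ℝ) : ℂ)) := by
    have : (fun x : ℝ => ((b x : ℝ) : ℂ)) = Complex.ofReal ∘ (fun x => b x) := rfl
    rw [this]
    exact b.hasCompactSupport.comp_left Complex.ofReal_zero
  refine ⟨toSchwartz _ hcd hcs, ?_, ?_⟩
  · rw [toSchwartz_apply]
    norm_cast
    exact b.one_of_mem_closedBall (by simp [Metric.mem_closedBall]; positivity)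
  · intro x hx
    rw [toSchwartz_apply]
    norm_cast
    exact b.zero_of_le_dist (by rwa [Real.dist_eq])

/-- For each `j = 1,…,N` the assignment
`φ ↦ N^{−1/2} Σ_{n∈ℤ} exp(−inθ₁) φ(q_j + n)` (the series converging absolutely for every
Schwartz `φ`) defines a tempered distribution `u_j`; each `u_j` lies in `ℋ_T(θ₁,θ₂)`, and
the family `(u_j)` is linearly independent over `ℂ`. -/
theorem stmt_5 (N : ℕ) (hN : 1 ≤ N) (θ₁ θ₂ : ℝ) :
    (∀ j : Fin N, ∀ φ : SchwartzMap ℝ ℂ,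
      Summable fun n : ℤ =>
        ‖Complex.exp (-Complex.I * (n : ℂ) * θ₁) * φ (qpt N θ₂ j + n)‖) ∧
    ∃ u : Fin N → (SchwartzMap ℝ ℂ →L[ℂ] ℂ),
      (∀ j : Fin N, ∀ φ : SchwartzMap ℝ ℂ,
        u j φ = ((N : ℝ) ^ (-(1 / 2 : ℝ)) : ℝ) *
          ∑' n : ℤ, Complex.exp (-Complex.I * (n : ℂ) * θ₁) * φ (qpt N θ₂ j + n)) ∧
      (∀ j : Fin N, u j ∈ HT N θ₁ θ₂) ∧
      LinearIndependent ℂ u := by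
  refine ⟨fun j φ => summable_norm_term θ₁ (qpt N θ₂ j) φ, ?_⟩
  set c : ℂ := (((N : ℝ) ^ (-(1 / 2 : ℝ)) : ℝ) : ℂ) with hc_def
  have hc : c ≠ 0 := by
    rw [hc_def]
    exact Complex.ofReal_ne_zero.2 (ne_of_gt (Real.rpow_pos_of_pos
      (by exact_mod_cast Nat.pos_of_ne_zero (by omega)) _))
  refine ⟨fun j => c • TD θ₁ (qpt N θ₂ j), fun j φ => ?_, fun j => ?_, ?_⟩
  · rw [ContinuousLinearMap.smul_apply, TD_apply, smul_eq_mul]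
  · exact Submodule.smul_mem _ c
      ⟨fun φ ψ h => TD_translate θ₁ _ φ ψ h, fun φ ψ h => TD_modulate N hN θ₁ θ₂ j φ ψ h⟩
  · rw [Fintype.linearIndependent_iff]
    intro g hg k
    obtain ⟨φ, hφ1, hφ0⟩ := exists_bump (qpt N θ₂ k) (1/(2*(N:ℝ)))
      (by positivity)
    have hNpos : (0:ℝ) < N := by exact_mod_cast Nat.pos_of_ne_zero (by omega)
    have hvan : ∀ (i : Fin N) (n : ℤ), ¬(i = k ∧ n = 0) → φ (qpt N θ₂ i + n) = 0 := by
      intro i n hin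
      apply hφ0
      have h1 := qpt_sep N hN θ₂ i k n hin
      calc 1/(2*(N:ℝ)) ≤ 1/(N:ℝ) := by
            apply one_div_le_one_div_of_le hNpos
            linarith
        _ ≤ |qpt N θ₂ i + n - qpt N θ₂ k| := h1
    have hTD : ∀ i : Fin N, TD θ₁ (qpt N θ₂ i) φ = if i = k then 1 else 0 := by
      intro i
      rw [TD_apply]
      by_cases hik : i = k
      · subst hik
        rw [tsum_eq_single 0 (fun n hn => by
          rw [hvan i n (fun hc' => hn hc'.2), mul_zero])]
        simp [hφ1]
      · simp only [if_neg hik]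
        rw [tsum_congr (fun n => by rw [hvan i n (fun hc' => hik hc'.1), mul_zero]), tsum_zero]
    have happ := congrArg (fun T : SchwartzMap ℝ ℂ →L[ℂ] ℂ => T φ) hg
    simp only [ContinuousLinearMap.coe_sum', Finset.sum_apply, ContinuousLinearMap.smul_apply,
      ContinuousLinearMap.zero_apply, smul_eq_mul, hTD, mul_ite, mul_one, mul_zero] at happ
    rw [Finset.sum_ite_eq' Finset.univ k (fun i => g i * c)] at happ
    simp only [Finset.mem_univ, if_true] at happ
    exact (mul_eq_zero.1 happ).resolve_right hc
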